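/- For real b > 0 and complex s with 0 < Re(s) < 1, the improper integral ∫₀^∞ cos(bt) · t^{s−1} dt equals cos(πs/2) · b^{−s} · Γ(s). -/

import Mathlib

open Complex MeasureTheory Filter Real

open Set Topology

/-!
For `0 < Re z` the Laplace integral `∫₀^∞ t^(s-1) e^(-zt) dt` converges absolutely and equals
`z^(-s) Γ(s)`: both sides are holomorphic in `z` and agree for real `z > 0` by the substitution
`t ↦ t / z` in Euler's integral. Integrating by parts against `e^(-zt)` bounds the tails `∫_T^T'`
by `C T^(Re s - 1) / |z|`, uniformly on the closed half-plane `0 ≤ Re z`. Since `z ↦ ∫₀^T` is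
continuous there, the resulting estimate `|∫₀^T - z^(-s) Γ(s)| ≤ C T^(Re s - 1) / |z|` extends to
`z = ±ib`, where `(±ib)^(-s) = b^(-s) e^(∓iπs/2)`; averaging the two gives the cosine.
-/

lemma intervalIntegral_rpow_sub_one_le {a T₁ T₂ : ℝ} (ha : a < 0) (hT₁ : 0 < T₁) (hT : T₁ ≤ T₂) :
    ∫ t in T₁..T₂, t ^ (a - 1) ≤ T₁ ^ a / -a := by
  have hzero : (0 : ℝ) ∉ uIcc T₁ T₂ := by
    rw [uIcc_of_le hT]; exact fun h => hT₁.not_ge h.1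
  rw [integral_rpow (Or.inr ⟨by linarith, hzero⟩), sub_add_cancel, ← neg_div_neg_eq, neg_sub]
  gcongr
  · linarith
  · exact sub_le_self _ (rpow_nonneg (hT₁.le.trans hT) a)

section

variable {w z : ℂ}

lemma norm_ofReal_cpow_mul_cexp_neg_mul {t : ℝ} (ht : 0 < t) (w z : ℂ) :
    ‖(t : ℂ) ^ w * cexp (-(z * t))‖ = t ^ w.re * Real.exp (-(z.re * t)) := by
  rw [norm_mul, norm_cpow_eq_rpow_re_of_pos ht, Complex.norm_exp]
  simp

lemma norm_ofReal_cpow_mul_cexp_neg_mul_le (hz : 0 ≤ z.re) {t : ℝ} (ht : 0 < t) :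
    ‖(t : ℂ) ^ w * cexp (-(z * t))‖ ≤ t ^ w.re := by
  rw [norm_ofReal_cpow_mul_cexp_neg_mul ht]
  exact mul_le_of_le_one_right (by positivity) (Real.exp_le_one_iff.2 (by nlinarith))

lemma continuousOn_ofReal_cpow_mul_cexp_neg_mul (w z : ℂ) :
    ContinuousOn (fun t : ℝ => (t : ℂ) ^ w * cexp (-(z * t))) (Ioi 0) := by
  refine ContinuousOn.mul (fun t ht => ?_) (by fun_prop)
  exact (continuousAt_ofReal_cpow_const t w (Or.inr (ne_of_gt ht))).continuousWithinAt

lemma integrableOn_ofReal_cpow_mul_cexp_neg_mul_Ioi (hw : -1 < w.re) (hz : 0 < z.re) :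
    IntegrableOn (fun t : ℝ => (t : ℂ) ^ w * cexp (-(z * t))) (Ioi 0) := by
  refine Integrable.mono' (g := fun t : ℝ => t ^ w.re * Real.exp (-(z.re * t)))
    (by simpa [IntegrableOn] using integrableOn_rpow_mul_exp_neg_mul_rpow hw one_pos hz)
    ((continuousOn_ofReal_cpow_mul_cexp_neg_mul w z).aestronglyMeasurable measurableSet_Ioi) ?_
  filter_upwards [ae_restrict_mem measurableSet_Ioi] with t ht
  exact (norm_ofReal_cpow_mul_cexp_neg_mul ht w z).le

lemma intervalIntegrable_ofReal_cpow_mul_cexp_neg_mul (hw : -1 < w.re) (hz : 0 ≤ z.re)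
    {T : ℝ} (hT : 0 ≤ T) :
    IntervalIntegrable (fun t : ℝ => (t : ℂ) ^ w * cexp (-(z * t))) volume 0 T := by
  have hbound := intervalIntegral.intervalIntegrable_rpow' (a := 0) (b := T) hw
  rw [intervalIntegrable_iff_integrableOn_Ioc_of_le hT] at hbound ⊢
  refine Integrable.mono' hbound (((continuousOn_ofReal_cpow_mul_cexp_neg_mul w z).mono
    Ioc_subset_Ioi_self).aestronglyMeasurable measurableSet_Ioc) ?_
  filter_upwards [ae_restrict_mem measurableSet_Ioc] with t ht
  exact norm_ofReal_cpow_mul_cexp_neg_mul_le hz ht.1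

lemma continuousOn_intervalIntegral_ofReal_cpow_mul_cexp_neg_mul (hw : -1 < w.re)
    {T : ℝ} (hT : 0 ≤ T) :
    ContinuousOn (fun z : ℂ => ∫ t in (0 : ℝ)..T, (t : ℂ) ^ w * cexp (-(z * t)))
      {z | 0 ≤ z.re} := by
  intro z₀ _
  refine intervalIntegral.continuousWithinAt_of_dominated_interval (bound := fun t => t ^ w.re)
    ?_ ?_ (intervalIntegral.intervalIntegrable_rpow' hw) ?_
  · refine Eventually.of_forall fun z => ?_
    rw [uIoc_of_le hT]
    exact ((continuousOn_ofReal_cpow_mul_cexp_neg_mul w z).mono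
      Ioc_subset_Ioi_self).aestronglyMeasurable measurableSet_Ioc
  · filter_upwards [self_mem_nhdsWithin] with z hz
    refine ae_of_all _ fun t ht => ?_
    rw [uIoc_of_le hT] at ht
    exact norm_ofReal_cpow_mul_cexp_neg_mul_le hz ht.1
  · exact ae_of_all _ fun t _ => by fun_prop

lemma hasDerivAt_ofReal_cpow_mul_cexp_neg_mul {t : ℝ} (ht : 0 < t) (w z : ℂ) :
    HasDerivAt (fun x : ℂ => (t : ℂ) ^ w * cexp (-(x * t)))
      (-((t : ℂ) ^ (w + 1) * cexp (-(z * t)))) z := by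
  have ht0 : (t : ℂ) ≠ 0 := ofReal_ne_zero.2 ht.ne'
  refine ((((hasDerivAt_id z).mul_const (t : ℂ)).neg.cexp).const_mul ((t : ℂ) ^ w)).congr_deriv ?_
  rw [cpow_add _ _ ht0, cpow_one]
  simp only [Pi.neg_apply, id]
  ring

lemma hasDerivAt_integral_ofReal_cpow_mul_cexp_neg_mul (hw : -1 < w.re) (hz : 0 < z.re) :
    HasDerivAt (fun x : ℂ => ∫ t in Ioi (0 : ℝ), (t : ℂ) ^ w * cexp (-(x * t)))
      (∫ t in Ioi (0 : ℝ), -((t : ℂ) ^ (w + 1) * cexp (-(z * t)))) z := by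
  have hball : ∀ x ∈ Metric.ball z (z.re / 2), z.re / 2 ≤ x.re := fun x hx => by
    have := (abs_re_le_norm (x - z)).trans (mem_ball_iff_norm.1 hx).le
    rw [sub_re, abs_le] at this
    linarith
  refine (hasDerivAt_integral_of_dominated_loc_of_deriv_le (μ := volume.restrict (Ioi 0))
    (F := fun x t => (t : ℂ) ^ w * cexp (-(x * t)))
    (F' := fun x t => -((t : ℂ) ^ (w + 1) * cexp (-(x * t))))
    (bound := fun t : ℝ => t ^ (w.re + 1) * Real.exp (-(z.re / 2 * t)))
    (Metric.ball_mem_nhds z (half_pos hz)) ?_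
    (integrableOn_ofReal_cpow_mul_cexp_neg_mul_Ioi hw hz) ?_ ?_
    (by simpa [IntegrableOn] using
      integrableOn_rpow_mul_exp_neg_mul_rpow (by linarith) one_pos (half_pos hz)) ?_).2
  · exact Eventually.of_forall fun x =>
      (continuousOn_ofReal_cpow_mul_cexp_neg_mul w x).aestronglyMeasurable measurableSet_Ioi
  · exact ((continuousOn_ofReal_cpow_mul_cexp_neg_mul (w + 1) z).neg).aestronglyMeasurable
      measurableSet_Ioi
  · filter_upwards [ae_restrict_mem measurableSet_Ioi] with t (ht : 0 < t) x hx
    rw [norm_neg, norm_ofReal_cpow_mul_cexp_neg_mul ht, add_re, one_re]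
    gcongr
    nlinarith [hball x hx]
  · filter_upwards [ae_restrict_mem measurableSet_Ioi] with t (ht : 0 < t) x _
    exact hasDerivAt_ofReal_cpow_mul_cexp_neg_mul ht w x

lemma hasDerivAt_neg_cexp_neg_mul_div (hz : z ≠ 0) (x : ℝ) :
    HasDerivAt (fun t : ℝ => -cexp (-(z * t)) / z) (cexp (-(z * x))) x := by
  refine (((hasDerivAt_id (x : ℂ)).const_mul z).neg.cexp.comp_ofReal.neg.div_const z).congr_deriv ?_
  field_simp
  simp

theorem norm_intervalIntegral_ofReal_cpow_mul_cexp_neg_mul_le (hw : w.re < 0) (hz : 0 ≤ z.re)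
    (hz0 : z ≠ 0) {T₁ T₂ : ℝ} (hT₁ : 0 < T₁) (hT : T₁ ≤ T₂) :
    ‖∫ t in T₁..T₂, (t : ℂ) ^ w * cexp (-(z * t))‖ ≤ (2 + ‖w‖ / -w.re) / ‖z‖ * T₁ ^ w.re := by
  have hpos : ∀ x ∈ uIcc T₁ T₂, 0 < x := fun x hx =>
    hT₁.trans_le (by rw [uIcc_of_le hT] at hx; exact hx.1)
  have hu : ∀ x ∈ uIcc T₁ T₂, HasDerivAt (fun t : ℝ => (t : ℂ) ^ w) (w * (x : ℂ) ^ (w - 1)) x :=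
    fun x hx => hasDerivAt_ofReal_cpow_const (hpos x hx).ne' (by rintro rfl; simp at hw)
  have hu' : IntervalIntegrable (fun x : ℝ => w * (x : ℂ) ^ (w - 1)) volume T₁ T₂ :=
    ContinuousOn.intervalIntegrable fun x hx => (continuous_const.continuousAt.mul
      (continuousAt_ofReal_cpow_const x _ (Or.inr (hpos x hx).ne'))).continuousWithinAt
  have hv' : IntervalIntegrable (fun x : ℝ => cexp (-(z * x))) volume T₁ T₂ :=
    (by fun_prop : Continuous fun x : ℝ => cexp (-(z * x))).intervalIntegrable _ _
  have hboundary : ∀ T, T₁ ≤ T → ‖(T : ℂ) ^ w * (-cexp (-(z * T)) / z)‖ ≤ T₁ ^ w.re / ‖z‖ := by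
    intro T hT₁T
    rw [mul_div_assoc', mul_neg, norm_div, norm_neg]
    gcongr
    exact (norm_ofReal_cpow_mul_cexp_neg_mul_le hz (hT₁.trans_le hT₁T)).trans
      (rpow_le_rpow_of_nonpos hT₁ hT₁T hw.le)
  have hintegral : ‖∫ x in T₁..T₂, w * (x : ℂ) ^ (w - 1) * (-cexp (-(z * x)) / z)‖
      ≤ ‖w‖ / -w.re / ‖z‖ * T₁ ^ w.re := by
    have hbound : IntervalIntegrable (fun x : ℝ => ‖w‖ / ‖z‖ * x ^ (w.re - 1)) volume T₁ T₂ :=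
      (ContinuousOn.intervalIntegrable fun x hx =>
        (continuousAt_rpow_const x _ (Or.inl (hpos x hx).ne')).continuousWithinAt).const_mul _
    calc _ ≤ ∫ x in T₁..T₂, ‖w‖ / ‖z‖ * x ^ (w.re - 1) := by
          refine intervalIntegral.norm_integral_le_of_norm_le hT (ae_of_all _ fun x hx => ?_) hbound
          rw [mul_div_assoc', mul_neg, mul_assoc, norm_div, norm_neg, norm_mul, mul_div_right_comm]
          gcongr
          simpa using norm_ofReal_cpow_mul_cexp_neg_mul_le (w := w - 1) hz (hT₁.trans hx.1)
      _ ≤ ‖w‖ / ‖z‖ * (T₁ ^ w.re / -w.re) := by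
          rw [intervalIntegral.integral_const_mul]
          gcongr
          exact intervalIntegral_rpow_sub_one_le hw hT₁ hT
      _ = ‖w‖ / -w.re / ‖z‖ * T₁ ^ w.re := by ring
  rw [intervalIntegral.integral_mul_deriv_eq_deriv_mul hu
    (fun x _ => hasDerivAt_neg_cexp_neg_mul_div hz0 x) hu' hv']
  calc _ ≤ T₁ ^ w.re / ‖z‖ + T₁ ^ w.re / ‖z‖ + ‖w‖ / -w.re / ‖z‖ * T₁ ^ w.re :=
        (norm_sub_le_of_le (norm_sub_le_of_le (hboundary T₂ hT) (hboundary T₁ le_rfl)) hintegral)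
    _ = (2 + ‖w‖ / -w.re) / ‖z‖ * T₁ ^ w.re := by ring

lemma norm_integral_Ioi_sub_intervalIntegral_ofReal_cpow_mul_cexp_neg_mul_le (hw : -1 < w.re)
    (hw' : w.re < 0) (hz : 0 < z.re) {T : ℝ} (hT : 0 < T) :
    ‖(∫ t in Ioi (0 : ℝ), (t : ℂ) ^ w * cexp (-(z * t)))
        - ∫ t in (0 : ℝ)..T, (t : ℂ) ^ w * cexp (-(z * t))‖
      ≤ (2 + ‖w‖ / -w.re) / ‖z‖ * T ^ w.re := by
  refine le_of_tendsto (((intervalIntegral_tendsto_integral_Ioi 0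
    (integrableOn_ofReal_cpow_mul_cexp_neg_mul_Ioi hw hz) tendsto_id).sub_const
      (∫ t in (0 : ℝ)..T, (t : ℂ) ^ w * cexp (-(z * t)))).norm) ?_
  filter_upwards [eventually_ge_atTop T] with T₂ hT₂
  rw [id, intervalIntegral.integral_interval_sub_left
    (intervalIntegrable_ofReal_cpow_mul_cexp_neg_mul hw hz.le (hT.le.trans hT₂))
    (intervalIntegrable_ofReal_cpow_mul_cexp_neg_mul hw hz.le hT.le)]
  exact norm_intervalIntegral_ofReal_cpow_mul_cexp_neg_mul_le hw' hz.le
    (by rintro rfl; simp at hz) hT hT₂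

end

section

variable {s z : ℂ}

theorem integral_ofReal_cpow_mul_cexp_neg_mul_Ioi (hs : 0 < s.re) (hz : 0 < z.re) :
    ∫ t in Ioi (0 : ℝ), (t : ℂ) ^ (s - 1) * cexp (-(z * t)) = z ^ (-s) * Gamma s := by
  have hw : -1 < (s - 1).re := by simp [hs]
  let U : Set ℂ := {z | 0 < z.re}
  have hU : IsOpen U := isOpen_lt continuous_const continuous_re
  have hlhs : AnalyticOnNhd ℂ
      (fun z : ℂ => ∫ t in Ioi (0 : ℝ), (t : ℂ) ^ (s - 1) * cexp (-(z * t))) U :=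
    DifferentiableOn.analyticOnNhd (fun z hz =>
      (hasDerivAt_integral_ofReal_cpow_mul_cexp_neg_mul hw hz).differentiableAt
        |>.differentiableWithinAt) hU
  have hrhs : AnalyticOnNhd ℂ (fun z : ℂ => z ^ (-s) * Gamma s) U :=
    DifferentiableOn.analyticOnNhd (fun z hz =>
      ((differentiableAt_id.cpow_const (Or.inl hz)).mul_const _).differentiableWithinAt) hU
  have hreal : Tendsto ((↑) : ℝ → ℂ) (𝓝[≠] 1) (𝓝[≠] 1) :=
    tendsto_nhdsWithin_iff.2 ⟨tendsto_nhdsWithin_of_tendsto_nhds continuous_ofReal.continuousAt,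
      eventually_nhdsWithin_of_forall fun r hr => ofReal_ne_one.2 hr⟩
  refine hlhs.eqOn_of_preconnected_of_frequently_eq hrhs (convex_halfSpace_re_gt 0).isPreconnected
    (z₀ := 1) (by simp [U]) (hreal.frequently ?_) hz
  refine ((eventually_gt_nhds one_pos).filter_mono nhdsWithin_le_nhds).frequently.mono
    fun r (hr : 0 < r) => ?_
  rw [integral_cpow_mul_exp_neg_mul_Ioi hs hr, one_div,
    inv_cpow _ _ (by rw [arg_ofReal_of_nonneg hr.le]; exact pi_ne_zero.symm), ← cpow_neg]

theorem norm_intervalIntegral_sub_cpow_mul_Gamma_le (hs₀ : 0 < s.re) (hs₁ : s.re < 1)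
    (hz : 0 ≤ z.re) (hz0 : z ≠ 0) {T : ℝ} (hT : 0 < T) :
    ‖(∫ t in (0 : ℝ)..T, (t : ℂ) ^ (s - 1) * cexp (-(z * t))) - z ^ (-s) * Gamma s‖
      ≤ (2 + ‖s - 1‖ / -(s - 1).re) / ‖z‖ * T ^ (s - 1).re := by
  have hw : -1 < (s - 1).re := by simp [hs₀]
  have hslit : z ∈ slitPlane :=
    mem_slitPlane_iff.2 (hz.lt_or_eq.imp id fun h him => hz0 (Complex.ext h.symm him))
  have hcl : z ∈ closure {z : ℂ | 0 < z.re} := by rwa [closure_setOfPred_lt_re]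
  refine ContinuousWithinAt.closure_le
    (f := fun x => ‖(∫ t in (0 : ℝ)..T, (t : ℂ) ^ (s - 1) * cexp (-(x * t))) - x ^ (-s) * Gamma s‖)
    (g := fun x => (2 + ‖s - 1‖ / -(s - 1).re) / ‖x‖ * T ^ (s - 1).re)
    hcl ?_ ?_ fun x (hx : 0 < x.re) => ?_
  · refine (((continuousOn_intervalIntegral_ofReal_cpow_mul_cexp_neg_mul hw hT.le z hz).mono
      fun x (hx : 0 < x.re) => hx.le).sub ?_).norm
    exact ((continuousAt_cpow_const hslit).mul_const _).continuousWithinAt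
  · exact ((continuousAt_const.div continuous_norm.continuousAt (norm_ne_zero_iff.2 hz0)).mul
      continuousAt_const).continuousWithinAt
  · rw [← integral_ofReal_cpow_mul_cexp_neg_mul_Ioi hs₀ hx, norm_sub_rev]
    exact norm_integral_Ioi_sub_intervalIntegral_ofReal_cpow_mul_cexp_neg_mul_le hw
      (by simp [hs₁]) hx hT

theorem tendsto_intervalIntegral_ofReal_cpow_mul_cexp_neg_mul (hs₀ : 0 < s.re) (hs₁ : s.re < 1)
    (hz : 0 ≤ z.re) (hz0 : z ≠ 0) :
    Tendsto (fun T : ℝ => ∫ t in (0 : ℝ)..T, (t : ℂ) ^ (s - 1) * cexp (-(z * t))) atTop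
      (𝓝 (z ^ (-s) * Gamma s)) := by
  have hw' : 0 < -(s - 1).re := by simp [hs₁]
  rw [tendsto_iff_norm_sub_tendsto_zero]
  refine squeeze_zero' (Eventually.of_forall fun _ => norm_nonneg _)
    ((eventually_gt_atTop 0).mono fun T hT =>
      norm_intervalIntegral_sub_cpow_mul_Gamma_le hs₀ hs₁ hz hz0 hT) ?_
  simpa using (tendsto_rpow_neg_atTop hw').const_mul ((2 + ‖s - 1‖ / -(s - 1).re) / ‖z‖)

end

lemma ofReal_mul_cpow {r : ℝ} (hr : 0 < r) {x : ℂ} (hx : x ≠ 0) (w : ℂ) :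
    ((r : ℂ) * x) ^ w = (r : ℂ) ^ w * x ^ w := by
  rw [cpow_def_of_ne_zero (mul_ne_zero (ofReal_ne_zero.2 hr.ne') hx), log_ofReal_mul hr hx,
    cpow_def_of_ne_zero hx, cpow_def_of_ne_zero (ofReal_ne_zero.2 hr.ne'), ofReal_log hr.le,
    add_mul, Complex.exp_add]

lemma I_cpow_add_neg_I_cpow (w : ℂ) : I ^ w + (-I) ^ w = 2 * Complex.cos (π * w / 2) := by
  rw [cpow_def_of_ne_zero I_ne_zero, cpow_def_of_ne_zero (neg_ne_zero.2 I_ne_zero), log_I,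
    log_neg_I, two_cos]
  ring_nf

theorem improper_cos_mellin (b : ℝ) (s : ℂ) (hb : 0 < b) (h1 : 0 < s.re) (h2 : s.re < 1) :
    Tendsto (fun T : ℝ => ∫ t in (0 : ℝ)..T, Complex.cos ((b : ℂ) * t) * (t : ℂ) ^ (s - 1))
      atTop
      (nhds (Complex.cos ((π : ℂ) * s / 2) * (b : ℂ) ^ (-s) * Complex.Gamma s)) := by
  have hw : -1 < (s - 1).re := by simp [h1]
  have hbI : (b : ℂ) * I ≠ 0 := mul_ne_zero (ofReal_ne_zero.2 hb.ne') I_ne_zero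
  have hplus := tendsto_intervalIntegral_ofReal_cpow_mul_cexp_neg_mul h1 h2 (by simp) hbI
  have hminus := tendsto_intervalIntegral_ofReal_cpow_mul_cexp_neg_mul h1 h2 (by simp)
    (neg_ne_zero.2 hbI)
  have hlim : (((b : ℂ) * I) ^ (-s) * Gamma s + (-((b : ℂ) * I)) ^ (-s) * Gamma s) / 2
      = Complex.cos (π * s / 2) * (b : ℂ) ^ (-s) * Gamma s := by
    rw [← mul_neg, ofReal_mul_cpow hb I_ne_zero, ofReal_mul_cpow hb (neg_ne_zero.2 I_ne_zero),
      ← Complex.cos_neg, ← neg_div, ← mul_neg]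
    linear_combination ((b : ℂ) ^ (-s) * Gamma s / 2) * I_cpow_add_neg_I_cpow (-s)
  rw [← hlim]
  refine ((hplus.add hminus).div_const 2).congr' ?_
  filter_upwards [eventually_ge_atTop 0] with T hT
  rw [← intervalIntegral.integral_add (intervalIntegrable_ofReal_cpow_mul_cexp_neg_mul hw
      (by simp) hT) (intervalIntegrable_ofReal_cpow_mul_cexp_neg_mul hw (by simp) hT),
    ← intervalIntegral.integral_div]
  refine intervalIntegral.integral_congr fun t _ => ?_
  rw [show -((b : ℂ) * I * t) = -(b * t) * I by ring,
    show -(-((b : ℂ) * I) * t) = b * t * I by ring]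
  linear_combination (-(t : ℂ) ^ (s - 1) / 2) * two_cos ((b : ℂ) * t)
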